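/- arXiv:2505.15002 — 2 statements merged into one kernel-verified Lean document; each statement's English description precedes it below -/
import Mathlib

section
/- In the category PSet of sets and partial functions, for f : A ⇀ B ⊔ A, the iteration iterate f : A ⇀ B defined by iterate f (a) = b whenever there exists n with [ι_B, f]ⁿ(ι_A a) = ι_B b (and undefined otherwise) satisfies the fixed point equation [id_B, iterate f] ∘ f = iterate f. -/
/-!
Both sides are computed from the first step `f a`. If it lands in `B`, both sides return that
value; if it lands in `ι_A a'`, then `[ι_B, f]ⁿ⁺¹ (ι_A a) = [ι_B, f]ⁿ (ι_A a')` and the left side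
is `iterate f a'`, which is the right side. The only subtlety is that `iterate f` picks its value by
choice; it is well defined because `ι_B b` is a fixed point of `[ι_B, f]`, so any two iterates that
reach `B` from the same point reach the same element.
-/

universe u v

variable {α : Type u} {β : Type v}

/-- The copairing `[ι_B, f] : B ⊔ A ⇀ B ⊔ A` of the coproduct injection `ι_B`
with `f : A ⇀ B ⊔ A`. -/
def pstep (f : α →. β ⊕ α) : β ⊕ α →. β ⊕ α :=
  fun x => Sum.elim (fun b => Part.some (Sum.inl b)) f x

/-- The `n`-fold composite `[ι_B, f]ⁿ` of the partial function `pstep f`. -/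
def pstepPow (f : α →. β ⊕ α) : ℕ → (β ⊕ α →. β ⊕ α)
  | 0 => fun x => Part.some x
  | n + 1 => PFun.comp (pstep f) (pstepPow f n)

/-- The iteration `iterate f : A ⇀ B` of `f : A ⇀ B ⊔ A`: defined at `a` with value
`b` precisely when `[ι_B, f]ⁿ (ι_A a) = ι_B b` for some `n` (and undefined
otherwise). -/
noncomputable def psetIterate (f : α →. β ⊕ α) : α →. β :=
  fun a =>
    ⟨∃ n b, Sum.inl b ∈ pstepPow f n (Sum.inr a),
      fun h => Classical.choose (Classical.choose_spec h)⟩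

section

variable (f : α →. β ⊕ α)

lemma pstepPow_inl (n : ℕ) (b : β) : pstepPow f n (Sum.inl b) = Part.some (Sum.inl b) := by
  induction n with
  | zero => rfl
  | succ n ih =>
    simp only [pstepPow, PFun.comp_apply, ih]
    exact Part.bind_some _ (pstep f)

lemma pstepPow_succ' (n : ℕ) : pstepPow f (n + 1) = (pstepPow f n).comp (pstep f) := by
  induction n with
  | zero => exact (PFun.comp_id _).trans (PFun.id_comp _).symm
  | succ n ih =>
    calc (pstep f).comp (pstepPow f (n + 1))
        = (pstep f).comp ((pstepPow f n).comp (pstep f)) := by rw [ih]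
      _ = ((pstep f).comp (pstepPow f n)).comp (pstep f) := (PFun.comp_assoc _ _ _).symm

lemma mem_pstepPow_succ {n : ℕ} {x y : β ⊕ α} :
    y ∈ pstepPow f (n + 1) x ↔ ∃ z ∈ pstepPow f n x, y ∈ pstep f z :=
  Part.mem_bind_iff

lemma inl_mem_pstepPow_succ_inr {n : ℕ} {a : α} {b : β} :
    Sum.inl b ∈ pstepPow f (n + 1) (Sum.inr a) ↔ ∃ c ∈ f a, Sum.inl b ∈ pstepPow f n c := by
  rw [pstepPow_succ']
  exact Part.mem_bind_iff

lemma inl_mem_pstepPow_of_le {x : β ⊕ α} {n m : ℕ} {b : β} (h : Sum.inl b ∈ pstepPow f n x)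
    (hnm : n ≤ m) : Sum.inl b ∈ pstepPow f m x := by
  induction hnm with
  | refl => exact h
  | step _ ih => exact (mem_pstepPow_succ f).2 ⟨_, ih, Part.mem_some _⟩

lemma eq_of_inl_mem_pstepPow {x : β ⊕ α} {n m : ℕ} {b b' : β} (h : Sum.inl b ∈ pstepPow f n x)
    (h' : Sum.inl b' ∈ pstepPow f m x) : b = b' :=
  Sum.inl_injective <| Part.mem_unique (inl_mem_pstepPow_of_le f h (le_max_left n m))
    (inl_mem_pstepPow_of_le f h' (le_max_right n m))

lemma mem_psetIterate_iff {a : α} {b : β} :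
    b ∈ psetIterate f a ↔ ∃ n, Sum.inl b ∈ pstepPow f n (Sum.inr a) := by
  constructor
  · rintro ⟨h, rfl⟩
    exact ⟨_, Classical.choose_spec (Classical.choose_spec h)⟩
  · rintro ⟨n, hn⟩
    have hdom : ∃ n b, Sum.inl b ∈ pstepPow f n (Sum.inr a) := ⟨n, b, hn⟩
    exact ⟨hdom, eq_of_inl_mem_pstepPow f (Classical.choose_spec (Classical.choose_spec hdom)) hn⟩

lemma mem_elim_psetIterate_iff {c : β ⊕ α} {b : β} :
    b ∈ Sum.elim (fun b => Part.some b) (psetIterate f) c ↔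
      ∃ n, Sum.inl b ∈ pstepPow f n c := by
  cases c with
  | inl b' =>
    simp only [pstepPow_inl, Part.mem_some_iff, Sum.inl.injEq, exists_const]
    exact Part.mem_some_iff
  | inr a => exact mem_psetIterate_iff f

end

/-- **Fixed point equation for iteration in `PSet`.**
`[id_B, iterate f] ∘ f = iterate f`, where `[id_B, iterate f]` is the copairing
of the identity partial function on `B` with `iterate f`, and `∘` is composition
of partial functions. -/
theorem psetIterate_fixed_point (f : α →. β ⊕ α) :
    (PFun.comp (Sum.elim (fun b => Part.some b) (psetIterate f) : β ⊕ α →. β) f) =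
      psetIterate f := by
  funext a
  ext b
  refine Part.mem_bind_iff.trans ?_
  simp_rw [mem_elim_psetIterate_iff, mem_psetIterate_iff]
  constructor
  · rintro ⟨c, hc, n, hn⟩
    exact ⟨n + 1, (inl_mem_pstepPow_succ_inr f).2 ⟨c, hc, hn⟩⟩
  · rintro ⟨_ | n, hn⟩
    · exact absurd (Part.mem_some_iff.1 hn) Sum.inl_ne_inr
    · obtain ⟨c, hc, hn⟩ := (inl_mem_pstepPow_succ_inr f).1 hn
      exact ⟨c, hc, n, hn⟩
end

section
/- Let L : C^op → Cat be a strictly indexed category such that C has finite coproducts. Then L is binary-coproduct-extensive (L sends binary coproducts in C to binary products in Cat) with L(W) nonempty for some object W if and only if L is finite-coproduct-extensive (L additionally sends the initial object of C to the terminal category). -/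
/-!
Since `0` is initial, both coproduct injections `0 ⟶ 0 ⨿ 0` coincide, so the comparison functor
`L(0 ⨿ 0) ⟶ L(0) × L(0)` followed by either projection is the same functor. When the comparison
functor is an isomorphism it is an epimorphism in `Cat`, hence the two projections
`L(0) × L(0) ⟶ L(0)` are equal: `L(0)` has at most one object and at most one morphism between
any two objects. An object of some `L(W)`, restricted along `0 ⟶ W`, makes `L(0)` nonempty, so
`L(0)` is the terminal category.
-/

open CategoryTheory Limits Opposite

universe v u u₂

variable {C : Type u} [Category.{v} C] [HasBinaryCoproducts C] [HasInitial C]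

/-- The canonical comparison functor `L(A ⊔ B) ⟶ L(A) × L(B)` induced by the
coproduct injections, as a morphism in `Cat`. -/
noncomputable def extComparison (L : Cᵒᵖ ⥤ Cat.{u₂, u₂}) (A B : C) :
    L.obj (op (A ⨿ B)) ⟶ Cat.of (↑(L.obj (op A)) × ↑(L.obj (op B))) :=
  (Functor.prod' (L.map (coprod.inl : A ⟶ A ⨿ B).op).toFunctor
    (L.map (coprod.inr : B ⟶ A ⨿ B).op).toFunctor).toCatHom

/-- `L` is binary-coproduct-extensive: every comparison functor
`L(A ⊔ B) ⟶ L(A) × L(B)` is an isomorphism of categories. -/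
def BinaryExtensive (L : Cᵒᵖ ⥤ Cat.{u₂, u₂}) : Prop :=
  ∀ A B : C, IsIso (extComparison L A B)

namespace CategoryTheory

section FstEqSnd

variable {E : Type*} [Category E]

theorem Prod.subsingleton_of_fst_eq_snd (h : Prod.fst E E = Prod.snd E E) : Subsingleton E :=
  ⟨fun x y => Functor.congr_obj h (x, y)⟩

theorem Prod.isThin_of_fst_eq_snd (h : Prod.fst E E = Prod.snd E E) : Quiver.IsThin E :=
  fun x y => ⟨fun f g => by simpa using Functor.congr_hom h (X := (x, x)) (Y := (y, y)) (f, g)⟩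

end FstEqSnd

def Cat.isoDiscretePUnitOfSubsingleton {E : Cat.{u₂, u₂}} [Subsingleton E] [Quiver.IsThin E]
    (e : E) : E ≅ Cat.of (Discrete PUnit.{u₂ + 1}) where
  hom := (Functor.star E).toCatHom
  inv := (Functor.fromPUnit e).toCatHom
  hom_inv_id := Cat.ext <| Functor.ext (fun _ => Subsingleton.elim _ _)
    (fun _ _ _ => Subsingleton.elim _ _)
  inv_hom_id := Cat.ext <| Functor.ext (fun _ => rfl) (fun _ _ _ => rfl)

end CategoryTheory

theorem fst_eq_snd_of_isIso_extComparison_initial (L : Cᵒᵖ ⥤ Cat.{u₂, u₂})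
    [IsIso (extComparison L (⊥_ C) (⊥_ C))] :
    CategoryTheory.Prod.fst (L.obj (op (⊥_ C))) (L.obj (op (⊥_ C))) =
      CategoryTheory.Prod.snd _ _ := by
  have hinl_inr : (coprod.inl : ⊥_ C ⟶ (⊥_ C) ⨿ (⊥_ C)) = coprod.inr := initial.hom_ext _ _
  have hcomp : extComparison L (⊥_ C) (⊥_ C) ≫ (CategoryTheory.Prod.fst _ _).toCatHom =
      extComparison L (⊥_ C) (⊥_ C) ≫ (CategoryTheory.Prod.snd _ _).toCatHom :=
    congrArg (fun i : ⊥_ C ⟶ (⊥_ C) ⨿ (⊥_ C) => L.map i.op) hinl_inr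
  exact congrArg Cat.Hom.toFunctor ((cancel_epi _).1 hcomp)

/-- **Binary extensivity + a nonempty fiber = finite extensivity.**
`L` is binary-coproduct-extensive with `L(W)` nonempty for some `W` iff `L` is
finite-coproduct-extensive, i.e. binary-coproduct-extensive and `L(0)` is
isomorphic (in `Cat`) to the terminal category. -/
theorem binaryExtensive_nonempty_iff_finiteExtensive (L : Cᵒᵖ ⥤ Cat.{u₂, u₂}) :
    (BinaryExtensive L ∧ ∃ W : C, Nonempty ↑(L.obj (op W))) ↔
      (BinaryExtensive L ∧
        Nonempty (L.obj (op (⊥_ C)) ≅ Cat.of (Discrete PUnit.{u₂ + 1}))) := by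
  constructor
  · rintro ⟨hbin, W, ⟨w⟩⟩
    have : IsIso (extComparison L (⊥_ C) (⊥_ C)) := hbin _ _
    have hfst := fst_eq_snd_of_isIso_extComparison_initial L
    have : Subsingleton (L.obj (op (⊥_ C))) := Prod.subsingleton_of_fst_eq_snd hfst
    have : Quiver.IsThin (L.obj (op (⊥_ C))) := Prod.isThin_of_fst_eq_snd hfst
    let w₀ : L.obj (op (⊥_ C)) := (L.map (initial.to W).op).toFunctor.obj w
    exact ⟨hbin, ⟨Cat.isoDiscretePUnitOfSubsingleton w₀⟩⟩
  · rintro ⟨hbin, ⟨e⟩⟩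
    exact ⟨hbin, ⊥_ C, ⟨e.inv.toFunctor.obj ⟨PUnit.unit⟩⟩⟩
end
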